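/- Let S = (S, CON, ⊢) be a continuous information system and let S(F(S)) = (CON, ĈON, ⊩) be the continuous information system obtained by applying F and then S, so that ĈON = { 𝔛 : ∃X ∈ CON, ∃𝔛̄ ∈ Ĉon_X, 𝔛 = 𝔛̄ ∪ {X} } and 𝔛 ⊩ Y iff ∃E ∈ 𝔛, E ⊢ Y. Define S_S ⊆ CON × CON by X S_S Y ⇔ X ⊢ Y, and T_S ⊆ ĈON × S by 𝔛 T_S a ⇔ ∃E ∈ 𝔛, E ⊢ a. Then: (1) S_S is an approximable mapping from S to S(F(S)); (2) T_S is an approximable mapping from S(F(S)) to S; (3) S_S ∘ T_S = Id_S; (4) T_S ∘ S_S = Id_{S(F(S))} (composition of approximable mappings being relational composition, and the identity on a system being its entailment relation). -/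
import Mathlib


open scoped Classical

/-! ### Continuous information frames -/

structure InfFrame (A : Type*) where
  Con : A → Set (Finset A)
  ent : A → Finset A → A → Prop

namespace InfFrame

variable {A B C : Type*}

/-- `X ⊨_i Y` : every element of `Y` is entailed by `X` at `i`. -/
def entS (𝔄 : InfFrame A) (i : A) (X Y : Finset A) : Prop :=
  ∀ b ∈ Y, 𝔄.ent i X b

/-- The axioms of a continuous information frame. -/
structure IsCIF (𝔄 : InfFrame A) : Prop where
  self_con : ∀ i : A, ({i} : Finset A) ∈ 𝔄.Con i
  con_sub : ∀ (i : A) (X Y : Finset A), Y ⊆ X → X ∈ 𝔄.Con i → Y ∈ 𝔄.Con i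
  sound : ∀ (i : A) (X Y : Finset A), X ∈ 𝔄.Con i → 𝔄.entS i X Y → Y ∈ 𝔄.Con i
  weaken : ∀ (i : A) (X Y : Finset A) (a : A),
    X ∈ 𝔄.Con i → Y ∈ 𝔄.Con i → X ⊆ Y → 𝔄.ent i X a → 𝔄.ent i Y a
  cut : ∀ (i : A) (X Y : Finset A) (a : A),
    X ∈ 𝔄.Con i → 𝔄.entS i X Y → 𝔄.ent i Y a → 𝔄.ent i X a
  con_transfer : ∀ i j : A, ({i} : Finset A) ∈ 𝔄.Con j → 𝔄.Con i ⊆ 𝔄.Con j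
  ent_transfer : ∀ (i j : A) (X : Finset A) (a : A),
    ({i} : Finset A) ∈ 𝔄.Con j → X ∈ 𝔄.Con i → 𝔄.ent i X a → 𝔄.ent j X a
  interp : ∀ (i : A) (X Y : Finset A), X ∈ 𝔄.Con i → 𝔄.entS i X Y →
    ∃ e : A, ∃ Z ∈ 𝔄.Con e, 𝔄.entS i X ({e} ∪ Z) ∧ 𝔄.entS e Z Y

/-- Condition (S): a continuous information frame is strong. -/
def Strong (𝔄 : InfFrame A) : Prop :=
  ∀ i : A, ∀ X ∈ 𝔄.Con i, X ≠ {i} → 𝔄.entS i {i} X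

/-- Condition (T): `t` is a truth element. -/
def IsTruth (𝔄 : InfFrame A) (t : A) : Prop :=
  ∀ i : A, 𝔄.ent i ∅ t

/-- Approximable families between continuous information frames. -/
structure IsApproxFam (𝔄 : InfFrame A) (𝔅 : InfFrame B)
    (H : A → Finset A → B → Prop) : Prop where
  af1 : ∀ (i : A) (X : Finset A) (k : B) (Y : Finset B) (b : B),
    X ∈ 𝔄.Con i → Y ∈ 𝔅.Con k → (∀ c ∈ ({k} : Finset B) ∪ Y, H i X c) →
    𝔅.ent k Y b → H i X b
  af2 : ∀ (i : A) (X X' : Finset A) (b : B),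
    X ∈ 𝔄.Con i → X' ∈ 𝔄.Con i → X ⊆ X' → H i X b → H i X' b
  af3 : ∀ (i : A) (X X' : Finset A) (b : B),
    X ∈ 𝔄.Con i → X' ∈ 𝔄.Con i → 𝔄.entS i X X' → H i X' b → H i X b
  af4 : ∀ (i j : A) (X : Finset A) (b : B),
    ({i} : Finset A) ∈ 𝔄.Con j → X ∈ 𝔄.Con i → H i X b → H j X b
  af5 : ∀ (i : A) (X : Finset A) (F : Finset B),
    X ∈ 𝔄.Con i → (∀ c ∈ F, H i X c) →
    ∃ c : A, ∃ U ∈ 𝔄.Con c, ∃ e : B, ∃ V ∈ 𝔅.Con e,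
      𝔄.entS i X ({c} ∪ U) ∧ (∀ d ∈ ({e} : Finset B) ∪ V, H c U d) ∧
      ∀ d ∈ F, 𝔅.ent e V d

/-- `H` respects the truth elements `t` and `t'`. -/
def RespectsTruth (H : A → Finset A → B → Prop) (t : A) (t' : B) : Prop :=
  H t ∅ t'

/-- Composition of approximable families (`𝔅` is the middle frame). -/
def compFam (𝔅 : InfFrame B)
    (G : A → Finset A → B → Prop) (H : B → Finset B → C → Prop) :
    A → Finset A → C → Prop :=
  fun i X a => ∃ e : B, ∃ V ∈ 𝔅.Con e,
    (∀ c ∈ ({e} : Finset B) ∪ V, G i X c) ∧ H e V a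

/-- Equality of families of relations `H_i ⊆ Con_i × B`. -/
def FamEq (𝔄 : InfFrame A) (H K : A → Finset A → B → Prop) : Prop :=
  ∀ i : A, ∀ X ∈ 𝔄.Con i, ∀ b : B, H i X b ↔ K i X b

end InfFrame

/-! ### (Simplified) continuous information systems -/

structure InfSys (S : Type*) where
  Con : Set (Finset S)
  ent : Finset S → S → Prop

namespace InfSys

variable {S T U : Type*}

/-- `X ⊢ Y` : every element of `Y` is entailed by `X`. -/
def entS (𝕊 : InfSys S) (X Y : Finset S) : Prop := ∀ b ∈ Y, 𝕊.ent X b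

/-- The axioms of a simplified continuous information system. -/
structure IsSCIS (𝕊 : InfSys S) : Prop where
  singleton_con : ∀ a : S, ({a} : Finset S) ∈ 𝕊.Con
  weaken : ∀ (X Y : Finset S) (a : S),
    X ∈ 𝕊.Con → Y ∈ 𝕊.Con → X ⊆ Y → 𝕊.ent X a → 𝕊.ent Y a
  cut : ∀ (X Y : Finset S) (a : S),
    X ∈ 𝕊.Con → Y ∈ 𝕊.Con → 𝕊.entS X Y → 𝕊.ent Y a → 𝕊.ent X a
  interp : ∀ X ∈ 𝕊.Con, ∀ a : S, 𝕊.ent X a →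
    ∃ Z ∈ 𝕊.Con, 𝕊.entS X Z ∧ 𝕊.ent Z a
  dir : ∀ X ∈ 𝕊.Con, ∀ F : Finset S, 𝕊.entS X F →
    ∃ Z ∈ 𝕊.Con, F ⊆ Z ∧ 𝕊.entS X Z

/-- The axioms of a continuous information system. -/
structure IsCIS (𝕊 : InfSys S) extends IsSCIS 𝕊 : Prop where
  insert_con : ∀ X ∈ 𝕊.Con, ∀ a : S, 𝕊.ent X a → X ∪ {a} ∈ 𝕊.Con

/-- Approximable mappings between (simplified) continuous information systems. -/
structure IsApproxMap (𝕊 : InfSys S) (𝕋 : InfSys T)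
    (H : Finset S → T → Prop) : Prop where
  am1 : ∀ X ∈ 𝕊.Con, ∀ Y ∈ 𝕋.Con, ∀ b : T,
    (∀ c ∈ Y, H X c) → 𝕋.ent Y b → H X b
  am2 : ∀ X ∈ 𝕊.Con, ∀ X' ∈ 𝕊.Con, ∀ b : T, X' ⊆ X → H X' b → H X b
  am3 : ∀ X ∈ 𝕊.Con, ∀ X' ∈ 𝕊.Con, ∀ b : T, 𝕊.entS X X' → H X' b → H X b
  am4 : ∀ X ∈ 𝕊.Con, ∀ b : T, H X b →
    ∃ Z ∈ 𝕊.Con, ∃ Z' ∈ 𝕋.Con, 𝕊.entS X Z ∧ (∀ c ∈ Z', H Z c) ∧ 𝕋.ent Z' b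
  am5 : ∀ X ∈ 𝕊.Con, ∀ F : Finset T, (∀ c ∈ F, H X c) →
    ∃ Z ∈ 𝕋.Con, F ⊆ Z ∧ ∀ c ∈ Z, H X c

/-- Relational composition of approximable mappings (`𝕋` is the middle system). -/
def compMap (𝕋 : InfSys T) (H : Finset S → T → Prop) (G : Finset T → U → Prop) :
    Finset S → U → Prop :=
  fun X u => ∃ Y ∈ 𝕋.Con, (∀ b ∈ Y, H X b) ∧ G Y u

/-- Equality of relations `H ⊆ Con × U`. -/
def MapEq (𝕊 : InfSys S) (H K : Finset S → U → Prop) : Prop :=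
  ∀ X ∈ 𝕊.Con, ∀ u : U, H X u ↔ K X u

end InfSys

/-! ### The constructions F, S, T and W -/

/-- The tokens of the frame `F(𝕊)`: the consistent sets of `𝕊`. -/
abbrev ConTok {S : Type*} (𝕊 : InfSys S) : Type _ := {X : Finset S // X ∈ 𝕊.Con}

/-- The frame `F(𝕊)` associated with a simplified continuous information system. -/
def Fframe {S : Type*} (𝕊 : InfSys S) : InfFrame (ConTok 𝕊) where
  Con X := {𝔛 | 𝔛 = {X} ∨ ∀ Y ∈ 𝔛, 𝕊.entS X.1 Y.1}
  ent X 𝔛 Y := ∃ E ∈ 𝔛 ∪ ({X} : Finset (ConTok 𝕊)), 𝕊.entS E.1 Y.1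

/-- The action of `F` on approximable mappings. -/
def Fmap {S T : Type*} (𝕊 : InfSys S) (𝕋 : InfSys T) (H : Finset S → T → Prop) :
    ConTok 𝕊 → Finset (ConTok 𝕊) → ConTok 𝕋 → Prop :=
  fun X 𝔛 Y => ∃ E ∈ 𝔛 ∪ ({X} : Finset (ConTok 𝕊)), ∀ b ∈ Y.1, H E.1 b

/-- The information system `S(𝔄)` associated with a (strong) continuous information frame. -/
def Ssys {A : Type*} (𝔄 : InfFrame A) : InfSys A where
  Con := {X | ∃ a : A, ∃ Xb ∈ 𝔄.Con a, X = Xb ∪ {a}}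
  ent X c := ∃ a : A, ∃ Xb ∈ 𝔄.Con a, X = Xb ∪ {a} ∧
    (𝔄.ent a Xb c ∨ 𝔄.ent a {a} c)

/-- The action of `S` on approximable families. -/
def Smap {A B : Type*} (𝔄 : InfFrame A) (H : A → Finset A → B → Prop) :
    Finset A → B → Prop :=
  fun X b => ∃ a : A, ∃ Xb ∈ 𝔄.Con a, X = Xb ∪ {a} ∧ (H a Xb b ∨ H a {a} b)

/-- The tokens of the frame `T(𝔄)`: pairs `(a, X)` with `X ∈ Con_a`. -/
abbrev TTok {A : Type*} (𝔄 : InfFrame A) : Type _ := {p : A × Finset A // p.2 ∈ 𝔄.Con p.1}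

/-- The strong frame `T(𝔄)` associated with a continuous information frame. -/
def Tframe {A : Type*} (𝔄 : InfFrame A) : InfFrame (TTok 𝔄) where
  Con aX := {𝔜 | 𝔜 = {aX} ∨ ∀ bY ∈ 𝔜, 𝔄.entS aX.1.1 aX.1.2 ({bY.1.1} ∪ bY.1.2)}
  ent aX 𝔛 eV := ∃ cZ ∈ 𝔛 ∪ ({aX} : Finset (TTok 𝔄)),
    𝔄.entS cZ.1.1 cZ.1.2 ({eV.1.1} ∪ eV.1.2)

/-- The action of `T` on approximable families. -/
def Tmap {A B : Type*} (𝔄 : InfFrame A) (𝔅 : InfFrame B)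
    (H : A → Finset A → B → Prop) :
    TTok 𝔄 → Finset (TTok 𝔄) → TTok 𝔅 → Prop :=
  fun aX 𝔛 bY => ∃ cZ ∈ 𝔛 ∪ ({aX} : Finset (TTok 𝔄)),
    ∀ d ∈ ({bY.1.1} : Finset B) ∪ bY.1.2, H cZ.1.1 cZ.1.2 d

/-- Removing the adjoined truth token: `X \ {t}` as a finite subset of `A`. -/
noncomputable def unsome {A : Type*} (X : Finset (Option A)) : Finset A :=
  X.preimage some (Option.some_injective A).injOn

/-- The frame `W(𝔄)`: `𝔄` extended by a (fresh) truth element `none`. -/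
def Wframe {A : Type*} (𝔄 : InfFrame A) : InfFrame (Option A) where
  Con a :=
    match a with
    | some a => {X | ∃ Y ∈ 𝔄.Con a, X = Y.image some ∨ X = Y.image some ∪ {none}}
    | none => {X | X = {none} ∨ X = ∅}
  ent a X c :=
    match a, c with
    | _, none => True
    | none, some _ => False
    | some a', some c' => 𝔄.ent a' (unsome X) c'

/-- The approximable mapping `S_𝕊 : 𝕊 ⟶ S(F(𝕊))`: `X S_𝕊 Y ⇔ X ⊢ Y`. -/
def SSmap {S : Type*} (𝕊 : InfSys S) : Finset S → ConTok 𝕊 → Prop :=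
  fun X Y => 𝕊.entS X Y.1

/-- The approximable mapping `T_𝕊 : S(F(𝕊)) ⟶ 𝕊`: `𝔛 T_𝕊 a ⇔ ∃ E ∈ 𝔛, E ⊢ a`. -/
def TSmap {S : Type*} (𝕊 : InfSys S) : Finset (ConTok 𝕊) → S → Prop :=
  fun 𝔛 a => ∃ E ∈ 𝔛, 𝕊.ent E.1 a

section Aux

lemma mem_union' {α : Type*} {i : DecidableEq α} {a : α} {s t : Finset α} :
    a ∈ @Union.union _ (@Finset.instUnion α i) s t ↔ a ∈ s ∨ a ∈ t :=
  Finset.mem_union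

lemma union_irrel {α : Type*} (i j : DecidableEq α) (s t : Finset α) :
    @Union.union _ (@Finset.instUnion α i) s t
      = @Union.union _ (@Finset.instUnion α j) s t := by
  congr!

variable {S : Type*} (𝕊 : InfSys S)

/-- Interpolation for finite sets. -/
lemma interpS (h : 𝕊.IsSCIS) {X : Finset S} (hX : X ∈ 𝕊.Con) (F : Finset S)
    (hF : 𝕊.entS X F) : ∃ Z ∈ 𝕊.Con, 𝕊.entS X Z ∧ 𝕊.entS Z F := by
  have h1 : ∀ a ∈ F, ∃ Z, Z ∈ 𝕊.Con ∧ 𝕊.entS X Z ∧ 𝕊.ent Z a := by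
    intro a ha
    obtain ⟨Z, hZ, h2, h3⟩ := h.interp X hX a (hF a ha)
    exact ⟨Z, hZ, h2, h3⟩
  choose! g hg1 hg2 hg3 using h1
  have hG : 𝕊.entS X (F.biUnion g) := by
    intro b hb
    rcases Finset.mem_biUnion.1 hb with ⟨a, ha, hb⟩
    exact hg2 a ha b hb
  obtain ⟨Z, hZ, hsub, hXZ⟩ := h.dir X hX (F.biUnion g) hG
  refine ⟨Z, hZ, hXZ, fun a ha => ?_⟩
  exact h.weaken (g a) Z a (hg1 a ha) hZ
    (fun x hx => hsub (Finset.mem_biUnion.2 ⟨a, ha, hx⟩)) (hg3 a ha)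

/-- Every consistent set of `S(F(𝕊))` has a "head" element entailing the others. -/
lemma head_of_con {𝔛 : Finset (ConTok 𝕊)} (h𝔛 : 𝔛 ∈ (Ssys (Fframe 𝕊)).Con) :
    ∃ X ∈ 𝔛, ∀ Y ∈ 𝔛, Y = X ∨ 𝕊.entS X.1 Y.1 := by
  obtain ⟨X, Xb, hXb, heq⟩ := h𝔛
  simp only [Fframe, Set.mem_setOf_eq] at hXb
  subst heq
  refine ⟨X, mem_union'.2 (Or.inr (Finset.mem_singleton_self X)), fun Y hY => ?_⟩
  rcases mem_union'.1 hY with hm | hm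
  · rcases hXb with h1 | h1
    · left; rw [h1] at hm; exact Finset.mem_singleton.1 hm
    · right; exact h1 Y hm
  · left; exact Finset.mem_singleton.1 hm

/-- Characterization of entailment in `S(F(𝕊))` on consistent sets. -/
lemma ent_Ssys_iff {𝔛 : Finset (ConTok 𝕊)} (h𝔛 : 𝔛 ∈ (Ssys (Fframe 𝕊)).Con)
    (Y : ConTok 𝕊) :
    (Ssys (Fframe 𝕊)).ent 𝔛 Y ↔ ∃ E ∈ 𝔛, 𝕊.entS E.1 Y.1 := by
  constructor
  · rintro ⟨X, Xb, hXb, heq, hent⟩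
    rcases hent with hh | hh
    · obtain ⟨E, hE, hEY⟩ := hh
      exact ⟨E, by rw [heq]; exact mem_union'.2 (mem_union'.1 hE), hEY⟩
    · obtain ⟨E, hE, hEY⟩ := hh
      have hEX : E = X := by
        rcases mem_union'.1 hE with hm | hm <;> exact Finset.mem_singleton.1 hm
      subst hEX
      exact ⟨E, by rw [heq]; exact mem_union'.2 (Or.inr (Finset.mem_singleton_self E)), hEY⟩
  · rintro ⟨E, hE, hEY⟩
    obtain ⟨X, Xb, hXb, heq⟩ := h𝔛
    exact ⟨X, Xb, hXb, heq, Or.inl ⟨E, by rw [heq] at hE; exact mem_union'.2 (mem_union'.1 hE), hEY⟩⟩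

/-- Singletons are consistent in `S(F(𝕊))`. -/
lemma singleton_con' (X : ConTok 𝕊) :
    ({X} : Finset (ConTok 𝕊)) ∈ (Ssys (Fframe 𝕊)).Con :=
  ⟨X, {X}, Or.inl rfl, by simp⟩

/-- With a head `X` of `𝔛`, `TSmap 𝔛 a` implies `X ⊢ a`. -/
lemma head_ent (h : 𝕊.IsSCIS) {𝔛 : Finset (ConTok 𝕊)} {X : ConTok 𝕊}
    (hhead : ∀ Y ∈ 𝔛, Y = X ∨ 𝕊.entS X.1 Y.1)
    {a : S} (ha : TSmap 𝕊 𝔛 a) : 𝕊.ent X.1 a := by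
  obtain ⟨E, hE, hEa⟩ := ha
  rcases hhead E hE with rfl | hXE
  · exact hEa
  · exact h.cut X.1 E.1 a X.2 E.2 hXE hEa

end Aux

/-- Lemma 14 (`lem-profST`): `S_𝕊` and `T_𝕊` are mutually inverse approximable
mappings between a continuous information system `𝕊` and `S(F(𝕊))`. -/
theorem SSmap_TSmap_props {S : Type*} (𝕊 : InfSys S) (h : 𝕊.IsCIS) :
    InfSys.IsApproxMap 𝕊 (Ssys (Fframe 𝕊)) (SSmap 𝕊) ∧
    InfSys.IsApproxMap (Ssys (Fframe 𝕊)) 𝕊 (TSmap 𝕊) ∧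
    InfSys.MapEq 𝕊
      (InfSys.compMap (Ssys (Fframe 𝕊)) (SSmap 𝕊) (TSmap 𝕊)) 𝕊.ent ∧
    InfSys.MapEq (Ssys (Fframe 𝕊))
      (InfSys.compMap 𝕊 (TSmap 𝕊) (SSmap 𝕊)) (Ssys (Fframe 𝕊)).ent := by
  have hs := h.toIsSCIS
  refine ⟨?_, ?_, ?_, ?_⟩
  · -- S_𝕊 is approximable
    constructor
    · -- am1
      intro X hX 𝔜 h𝔜 b hall hent
      obtain ⟨E, hE, hEb⟩ := (ent_Ssys_iff 𝕊 h𝔜 b).1 hent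
      intro c hc
      exact hs.cut X E.1 c hX E.2 (hall E hE) (hEb c hc)
    · -- am2
      intro X hX X' hX' b hsub hb c hc
      exact hs.weaken X' X c hX' hX hsub (hb c hc)
    · -- am3
      intro X hX X' hX' b hXX' hb c hc
      exact hs.cut X X' c hX hX' hXX' (hb c hc)
    · -- am4
      intro X hX b hb
      obtain ⟨Z1, hZ1, hXZ1, hZ1b⟩ := interpS 𝕊 hs hX b.1 hb
      obtain ⟨Z2, hZ2, hZ1Z2, hZ2b⟩ := interpS 𝕊 hs hZ1 b.1 hZ1b
      refine ⟨Z1, hZ1, {⟨Z2, hZ2⟩}, singleton_con' 𝕊 _, hXZ1, ?_, ?_⟩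
      · intro c hc
        rw [Finset.mem_singleton.1 hc]
        exact hZ1Z2
      · exact (ent_Ssys_iff 𝕊 (singleton_con' 𝕊 _) b).2
          ⟨⟨Z2, hZ2⟩, Finset.mem_singleton_self _, hZ2b⟩
    · -- am5
      intro X hX F hall
      have hG : 𝕊.entS X (F.biUnion (fun c => c.1)) := by
        intro b hb
        rcases Finset.mem_biUnion.1 hb with ⟨c, hc, hb⟩
        exact hall c hc b hb
      obtain ⟨W, hW, hXW, hWG⟩ := interpS 𝕊 hs hX _ hG
      refine ⟨F ∪ {⟨W, hW⟩}, ?_, Finset.subset_union_left, ?_⟩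
      · refine ⟨⟨W, hW⟩, F, Or.inr fun Y hY b hb => ?_, union_irrel _ _ _ _⟩
        exact hWG b (Finset.mem_biUnion.2 ⟨Y, hY, hb⟩)
      · intro c hc
        rcases Finset.mem_union.1 hc with hm | hm
        · exact hall c hm
        · rw [Finset.mem_singleton.1 hm]; exact hXW
  · -- T_𝕊 is approximable
    constructor
    · -- am1
      intro 𝔛 h𝔛 Y hY b hall hYb
      obtain ⟨X, hX𝔛, hhead⟩ := head_of_con 𝕊 h𝔛
      have hXY : 𝕊.entS X.1 Y := fun c hc => head_ent 𝕊 hs hhead (hall c hc)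
      exact ⟨X, hX𝔛, hs.cut X.1 Y b X.2 hY hXY hYb⟩
    · -- am2
      rintro 𝔛 h𝔛 𝔛' h𝔛' b hsub ⟨E, hE, hEb⟩
      exact ⟨E, hsub hE, hEb⟩
    · -- am3
      rintro 𝔛 h𝔛 𝔛' h𝔛' b hent ⟨E', hE', hE'b⟩
      obtain ⟨E, hE, hEE'⟩ := (ent_Ssys_iff 𝕊 h𝔛 E').1 (hent E' hE')
      exact ⟨E, hE, hs.cut E.1 E'.1 b E.2 E'.2 hEE' hE'b⟩
    · -- am4
      intro 𝔛 h𝔛 b hb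
      obtain ⟨X, hX𝔛, hhead⟩ := head_of_con 𝕊 h𝔛
      have hXb : 𝕊.ent X.1 b := head_ent 𝕊 hs hhead hb
      obtain ⟨Z1, hZ1, hXZ1, hZ1b⟩ := hs.interp X.1 X.2 b hXb
      obtain ⟨Z2, hZ2, hZ1Z2, hZ2b⟩ := hs.interp Z1 hZ1 b hZ1b
      refine ⟨{⟨Z1, hZ1⟩}, singleton_con' 𝕊 _, Z2, hZ2, ?_, ?_, hZ2b⟩
      · intro c hc
        rw [Finset.mem_singleton.1 hc]
        exact (ent_Ssys_iff 𝕊 h𝔛 _).2 ⟨X, hX𝔛, hXZ1⟩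
      · intro c hc
        exact ⟨⟨Z1, hZ1⟩, Finset.mem_singleton_self _, hZ1Z2 c hc⟩
    · -- am5
      intro 𝔛 h𝔛 F hall
      obtain ⟨X, hX𝔛, hhead⟩ := head_of_con 𝕊 h𝔛
      have hXF : 𝕊.entS X.1 F := fun c hc => head_ent 𝕊 hs hhead (hall c hc)
      obtain ⟨Z, hZ, hsub, hXZ⟩ := hs.dir X.1 X.2 F hXF
      exact ⟨Z, hZ, hsub, fun c hc => ⟨X, hX𝔛, hXZ c hc⟩⟩
  · -- S_𝕊 ∘ T_𝕊 = Id_𝕊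
    intro X hX u
    constructor
    · rintro ⟨𝔜, h𝔜, hall, E, hE, hEu⟩
      exact hs.cut X E.1 u hX E.2 (hall E hE) hEu
    · intro hXu
      obtain ⟨Z, hZ, hXZ, hZu⟩ := hs.interp X hX u hXu
      exact ⟨{⟨Z, hZ⟩}, singleton_con' 𝕊 _,
        fun b hb => by rw [Finset.mem_singleton.1 hb]; exact hXZ,
        ⟨Z, hZ⟩, Finset.mem_singleton_self _, hZu⟩
  · -- T_𝕊 ∘ S_𝕊 = Id_{S(F(𝕊))}
    intro 𝔛 h𝔛 Y
    constructor
    · rintro ⟨W, hW, hall, hWY⟩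
      obtain ⟨X, hX𝔛, hhead⟩ := head_of_con 𝕊 h𝔛
      have hXW : 𝕊.entS X.1 W := fun c hc => head_ent 𝕊 hs hhead (hall c hc)
      refine (ent_Ssys_iff 𝕊 h𝔛 Y).2 ⟨X, hX𝔛, fun c hc => ?_⟩
      exact hs.cut X.1 W c X.2 hW hXW (hWY c hc)
    · intro hent
      obtain ⟨E, hE, hEY⟩ := (ent_Ssys_iff 𝕊 h𝔛 Y).1 hent
      obtain ⟨W, hW, hEW, hWY⟩ := interpS 𝕊 hs E.2 Y.1 hEY
      exact ⟨W, hW, fun b hb => ⟨E, hE, hEW b hb⟩, hWY⟩
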